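/- In a finite connected weighted graph with all edge lengths at most ℓ_max, for any set S of sources, the stretch factor satisfies max_{p≠q} d(p,S,q)/d(p,q) ≥ (2/ℓ_max)·max_p d(p,s_p) − 1, where s_p denotes a closest source to p. -/
import Mathlib


open SimpleGraph Finset

noncomputable def walkLen {V : Type*} (G : SimpleGraph V) (ℓ : V → V → ℝ) {p q : V}
    (w : G.Walk p q) : ℝ :=
  (w.darts.map fun d => ℓ d.toProd.1 d.toProd.2).sum

noncomputable def gdist {V : Type*} (G : SimpleGraph V) (ℓ : V → V → ℝ) (p q : V) : ℝ :=
  sInf {x | ∃ w : G.Walk p q, walkLen G ℓ w = x}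

noncomputable def dvia {V : Type*} (G : SimpleGraph V) (ℓ : V → V → ℝ) (S : Finset V)
    (hS : S.Nonempty) (p q : V) : ℝ :=
  S.inf' hS fun s => gdist G ℓ p s + gdist G ℓ s q

noncomputable def dnear {V : Type*} (G : SimpleGraph V) (ℓ : V → V → ℝ) (S : Finset V)
    (hS : S.Nonempty) (p : V) : ℝ :=
  S.inf' hS fun s => gdist G ℓ p s

noncomputable def stretch {V : Type*} (G : SimpleGraph V) (ℓ : V → V → ℝ) (S : Finset V)
    (hS : S.Nonempty) : ℝ :=
  sSup {x | ∃ p q : V, p ≠ q ∧ x = dvia G ℓ S hS p q / gdist G ℓ p q}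

noncomputable def farthest {V : Type*} (G : SimpleGraph V) (ℓ : V → V → ℝ) (S : Finset V)
    (hS : S.Nonempty) : ℝ :=
  sSup {x | ∃ p : V, x = dnear G ℓ S hS p}

section aux

variable {V : Type*} {G : SimpleGraph V} {ℓ : V → V → ℝ}

lemma walkLen_nonneg (hpos : ∀ a b, G.Adj a b → 0 < ℓ a b) {p q : V} (w : G.Walk p q) :
    0 ≤ walkLen G ℓ w := by
  induction w with
  | nil => simp [walkLen]
  | cons h w ih =>
    simp only [walkLen, SimpleGraph.Walk.darts_cons, List.map_cons, List.sum_cons]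
    exact add_nonneg (hpos _ _ h).le ih

lemma gdist_set_nonempty (hconn : G.Connected) (p q : V) :
    {x | ∃ w : G.Walk p q, walkLen G ℓ w = x}.Nonempty := by
  obtain ⟨w⟩ := hconn.preconnected p q
  exact ⟨walkLen G ℓ w, w, rfl⟩

lemma gdist_set_bddBelow (hpos : ∀ a b, G.Adj a b → 0 < ℓ a b) (p q : V) :
    BddBelow {x | ∃ w : G.Walk p q, walkLen G ℓ w = x} :=
  ⟨0, fun x ⟨w, hw⟩ => hw ▸ walkLen_nonneg hpos w⟩

lemma gdist_le_walkLen (hpos : ∀ a b, G.Adj a b → 0 < ℓ a b) {p q : V} (w : G.Walk p q) :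
    gdist G ℓ p q ≤ walkLen G ℓ w :=
  csInf_le (gdist_set_bddBelow hpos p q) ⟨w, rfl⟩

lemma gdist_nonneg (hconn : G.Connected) (hpos : ∀ a b, G.Adj a b → 0 < ℓ a b) (p q : V) :
    0 ≤ gdist G ℓ p q :=
  le_csInf (gdist_set_nonempty hconn p q) fun x ⟨w, hw⟩ => hw ▸ walkLen_nonneg hpos w

lemma walkLen_append {p q r : V} (w1 : G.Walk p q) (w2 : G.Walk q r) :
    walkLen G ℓ (w1.append w2) = walkLen G ℓ w1 + walkLen G ℓ w2 := by
  simp [walkLen, SimpleGraph.Walk.darts_append]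

lemma gdist_triangle (hconn : G.Connected) (hpos : ∀ a b, G.Adj a b → 0 < ℓ a b) (p q r : V) :
    gdist G ℓ p r ≤ gdist G ℓ p q + gdist G ℓ q r := by
  refine le_of_forall_pos_le_add fun ε hε => ?_
  obtain ⟨x, ⟨w1, hw1⟩, hx⟩ := Real.lt_sInf_add_pos (gdist_set_nonempty (ℓ := ℓ) hconn p q) (by linarith : (0:ℝ) < ε/2)
  obtain ⟨y, ⟨w2, hw2⟩, hy⟩ := Real.lt_sInf_add_pos (gdist_set_nonempty (ℓ := ℓ) hconn q r) (by linarith : (0:ℝ) < ε/2)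
  have h := gdist_le_walkLen hpos (w1.append w2)
  rw [walkLen_append] at h
  rw [← hw1] at hx; rw [← hw2] at hy
  unfold gdist at *
  linarith

lemma walkLen_reverse (hsymm : ∀ a b, ℓ a b = ℓ b a) {p q : V} (w : G.Walk p q) :
    walkLen G ℓ w.reverse = walkLen G ℓ w := by
  simp only [walkLen, SimpleGraph.Walk.darts_reverse, List.map_reverse, List.sum_reverse,
    List.map_map]
  exact congrArg List.sum (List.map_congr_left fun d _ => by
    simp [Function.comp, SimpleGraph.Dart.symm, hsymm d.toProd.1 d.toProd.2])

lemma gdist_symm (hconn : G.Connected) (hpos : ∀ a b, G.Adj a b → 0 < ℓ a b)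
    (hsymm : ∀ a b, ℓ a b = ℓ b a) (p q : V) :
    gdist G ℓ p q = gdist G ℓ q p := by
  have key : ∀ a b : V, gdist G ℓ a b ≤ gdist G ℓ b a := by
    intro a b
    refine le_csInf (gdist_set_nonempty hconn b a) fun x ⟨w, hw⟩ => ?_
    calc gdist G ℓ a b ≤ walkLen G ℓ w.reverse := gdist_le_walkLen hpos w.reverse
    _ = x := by rw [walkLen_reverse hsymm, hw]
  exact le_antisymm (key p q) (key q p)

lemma gdist_pos [Fintype V] (hconn : G.Connected) (hpos : ∀ a b, G.Adj a b → 0 < ℓ a b)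
    {p q : V} (hpq : p ≠ q) : 0 < gdist G ℓ p q := by
  classical
  obtain ⟨w0⟩ := hconn.preconnected p q
  obtain ⟨a, b, hab⟩ : ∃ a b : V, G.Adj a b := by
    cases w0 with
    | nil => exact absurd rfl hpq
    | cons h _ => exact ⟨_, _, h⟩
  set P := Finset.univ.filter (fun e : V × V => G.Adj e.1 e.2) with hP
  have hne : P.Nonempty := ⟨(a, b), by simp [hP, hab]⟩
  set m := P.inf' hne (fun e => ℓ e.1 e.2) with hm
  have hm0 : 0 < m := by
    rw [hm, Finset.lt_inf'_iff]
    intro e he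
    rw [hP, Finset.mem_filter] at he
    exact hpos _ _ he.2
  have hge : m ≤ gdist G ℓ p q := by
    refine le_csInf (gdist_set_nonempty hconn p q) fun x ⟨w, hw⟩ => ?_
    subst hw
    cases w with
    | nil => exact absurd rfl hpq
    | cons h w' =>
      rename_i c hmem
      simp only [walkLen, SimpleGraph.Walk.darts_cons, List.map_cons, List.sum_cons]
      have h1 : m ≤ ℓ p c := Finset.inf'_le (fun e : V × V => ℓ e.1 e.2) (show ((p,c) : V × V) ∈ P by simp [hP, h])
      have h2 : (0:ℝ) ≤ walkLen G ℓ w' := walkLen_nonneg hpos w'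
      simp only [walkLen] at h2
      linarith
  linarith

end aux

/-- lower bound on the stretch factor in terms of the k-center objective. -/
theorem stmt_3 {V : Type*} [Fintype V] [Nontrivial V] (G : SimpleGraph V) (hconn : G.Connected)
    (ℓ : V → V → ℝ) (hsymm : ∀ a b, ℓ a b = ℓ b a) (hpos : ∀ a b, G.Adj a b → 0 < ℓ a b)
    (lmax : ℝ) (hlmax : 0 < lmax) (hmax : ∀ a b, G.Adj a b → ℓ a b ≤ lmax)
    (S : Finset V) (hS : S.Nonempty) :
    2 / lmax * farthest G ℓ S hS - 1 ≤ stretch G ℓ S hS := by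
  classical
  have hfin : {x | ∃ p : V, x = dnear G ℓ S hS p}.Finite := by
    have hsub : {x | ∃ p : V, x = dnear G ℓ S hS p} ⊆
        Set.range (fun p => dnear G ℓ S hS p) := by
      rintro x ⟨p, rfl⟩; exact ⟨p, rfl⟩
    exact (Set.finite_range _).subset hsub
  have hne1 : {x | ∃ p : V, x = dnear G ℓ S hS p}.Nonempty :=
    ⟨_, Classical.arbitrary V, rfl⟩
  obtain ⟨p₀, hp₀⟩ : ∃ p : V, farthest G ℓ S hS = dnear G ℓ S hS p :=
    hne1.csSup_mem hfin
  obtain ⟨v, hv⟩ := exists_ne p₀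
  obtain ⟨w⟩ := hconn.preconnected p₀ v
  obtain ⟨q, hq⟩ : ∃ q, G.Adj p₀ q := by
    cases w with
    | nil => exact absurd rfl hv
    | cons h _ => exact ⟨_, h⟩
  set D := gdist G ℓ p₀ q with hD
  have hD0 : 0 < D := gdist_pos hconn hpos hq.ne
  have hDl : D ≤ lmax := by
    have h1 : gdist G ℓ p₀ q ≤ walkLen G ℓ (SimpleGraph.Walk.cons hq SimpleGraph.Walk.nil) :=
      gdist_le_walkLen hpos _
    have h2 : walkLen G ℓ (SimpleGraph.Walk.cons hq SimpleGraph.Walk.nil) = ℓ p₀ q := by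
      simp [walkLen]
    have h3 := hmax _ _ hq
    rw [h2] at h1
    linarith
  set R := dnear G ℓ S hS p₀ with hR
  have hR0 : 0 ≤ R :=
    Finset.le_inf' hS _ fun s _ => gdist_nonneg hconn hpos p₀ s
  have key : R ≤ D + dnear G ℓ S hS q := by
    obtain ⟨s, hs, hseq⟩ := Finset.exists_mem_eq_inf' hS (fun s => gdist G ℓ q s)
    have h1 : R ≤ gdist G ℓ p₀ s := Finset.inf'_le _ hs
    have h2 := gdist_triangle hconn hpos p₀ q s
    have h3 : dnear G ℓ S hS q = gdist G ℓ q s := hseq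
    linarith
  have hvia : R + dnear G ℓ S hS q ≤ dvia G ℓ S hS p₀ q := by
    refine Finset.le_inf' hS _ fun s hs => ?_
    have h1 : R ≤ gdist G ℓ p₀ s := Finset.inf'_le _ hs
    have h2 : dnear G ℓ S hS q ≤ gdist G ℓ q s := Finset.inf'_le _ hs
    rw [gdist_symm hconn hpos hsymm q s] at h2
    linarith
  have hbdd : BddAbove {x | ∃ p q : V, p ≠ q ∧ x = dvia G ℓ S hS p q / gdist G ℓ p q} := by
    have hsub : {x | ∃ p q : V, p ≠ q ∧ x = dvia G ℓ S hS p q / gdist G ℓ p q} ⊆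
        Set.range (fun e : V × V => dvia G ℓ S hS e.1 e.2 / gdist G ℓ e.1 e.2) := by
      rintro x ⟨p, q, _, rfl⟩; exact ⟨(p, q), rfl⟩
    exact ((Set.finite_range _).subset hsub).bddAbove
  have hst : dvia G ℓ S hS p₀ q / D ≤ stretch G ℓ S hS :=
    le_csSup hbdd ⟨p₀, q, hq.ne, rfl⟩
  have hvia2 : 2 * R - D ≤ dvia G ℓ S hS p₀ q := by linarith
  have h1 : (2 * R - D) / D ≤ dvia G ℓ S hS p₀ q / D :=
    div_le_div_of_nonneg_right hvia2 hD0.le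
  have h2 : (2 * R - D) / D = 2 * R / D - 1 := by field_simp
  have h3 : 2 * R / lmax ≤ 2 * R / D :=
    div_le_div_of_nonneg_left (by linarith) hD0 hDl
  have h4 : 2 / lmax * R = 2 * R / lmax := by ring
  rw [hp₀, h4]
  linarith
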